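/- For all complex z and w, the function f(z,w) := (1/√2) ∫_{−∞}^{0} [e^{−2(z−u)²} erfc(√2(w−u)) − e^{−2(w−u)²} erfc(√2(z−u))] du satisfies ∂_z f(z,w) = e^{−(z−w)²} erfc(z+w) − (1/√2) e^{−2z²} erfc(√2 w). -/

import Mathlib

/-- The complementary error function extended to complex arguments:
`erfc(z) = 1 - (2/√π) ∫₀^z e^{-t²} dt` along the segment from `0` to `z`. -/
noncomputable def cerfc (z : ℂ) : ℂ :=
  1 - (2 / (Real.sqrt Real.pi : ℂ)) * ∫ t in (0:ℝ)..1, z * Complex.exp (-((t : ℂ) * z) ^ 2)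

/-- `f(z,w) = (1/√2) ∫_{-∞}^0 [e^{-2(z-u)²} erfc(√2(w-u)) - e^{-2(w-u)²} erfc(√2(z-u))] du`. -/
noncomputable def fEdge (z w : ℂ) : ℂ :=
  (1 / (Real.sqrt 2 : ℂ)) * ∫ u in Set.Iio (0:ℝ),
    (Complex.exp (-2 * (z - (u : ℂ)) ^ 2) * cerfc ((Real.sqrt 2 : ℂ) * (w - (u : ℂ)))
      - Complex.exp (-2 * (w - (u : ℂ)) ^ 2) * cerfc ((Real.sqrt 2 : ℂ) * (z - (u : ℂ))))

/-!
Differentiation under the integral sign is justified by Cauchy's estimate, which turns a Gaussian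
bound on the integrand (via `|erfc ζ| ≤ 2 e^{(Im ζ)²}`) into one on its `z`-derivative. Because
`2(z-u)² + 2(w-u)² = (z-w)² + (z+w-2u)²`, that derivative is
`-∂_u [e^{-2(z-u)²} erfc(√2(w-u))] + (4√2/√π) e^{-(z-w)²} e^{-(z+w-2u)²}`.
The first term integrates to `-e^{-2z²} erfc(√2 w)`, the second to `√2 e^{-(z-w)²} erfc(z+w)` by
the half-line representation `∫_{-∞}^0 e^{-(c-at)²} dt = (√π/2a) erfc c`, which holds because
both sides are entire, have the same derivative and agree at `c = 0`.
-/

open MeasureTheory Metric Set Filter Topology Real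
open scoped Complex

theorem hasDerivAt_integral_of_differentiable_of_norm_le {α E : Type*} [MeasurableSpace α]
    {μ : Measure α} [NormedAddCommGroup E] [NormedSpace ℂ E] {F F' : ℂ → α → E} {c : ℂ} {r : ℝ}
    {bound : α → ℝ} (hr : 0 < r) (hF_meas : ∀ x, AEStronglyMeasurable (F x) μ)
    (hF'_meas : AEStronglyMeasurable (F' c) μ)
    (h_diff : ∀ᵐ a ∂μ, ∀ x, HasDerivAt (F · a) (F' x a) x)
    (h_bound : ∀ᵐ a ∂μ, ∀ x ∈ closedBall c r, ‖F x a‖ ≤ bound a)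
    (bound_integrable : Integrable bound μ) :
    Integrable (F' c) μ ∧ HasDerivAt (fun x ↦ ∫ a, F x a ∂μ) (∫ a, F' c a ∂μ) c := by
  have hr2 : 0 < r / 2 := half_pos hr
  refine hasDerivAt_integral_of_dominated_loc_of_deriv_le (ball_mem_nhds c hr2)
    (.of_forall hF_meas) (bound_integrable.mono' (hF_meas c)
      (h_bound.mono fun a ha ↦ ha c (mem_closedBall_self hr.le)))
    hF'_meas (bound := fun a ↦ bound a / (r / 2)) ?_ (bound_integrable.div_const _)
    (h_diff.mono fun a ha x _ ↦ ha x)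
  filter_upwards [h_diff, h_bound] with a ha_diff ha_bound x hx
  -- Cauchy's estimate on the circle of radius `r / 2` around `x`, which lies in `closedBall c r`
  rw [← (ha_diff x).deriv]
  refine Complex.norm_deriv_le_of_forall_mem_sphere_norm_le hr2
    (Differentiable.diffContOnCl fun y ↦ (ha_diff y).differentiableAt) fun y hy ↦ ha_bound y ?_
  rw [mem_sphere] at hy
  rw [mem_ball] at hx
  rw [mem_closedBall]
  linarith [dist_triangle y x c]

theorem tendsto_exp_sub_mul_sq_atBot (a : ℝ) {b : ℝ} (hb : 0 < b) :
    Tendsto (fun t ↦ rexp (a - b * t ^ 2)) atBot (𝓝 0) := by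
  have h_sq : Tendsto (fun t : ℝ ↦ t ^ 2) atBot atTop := by
    simpa [Function.comp_def] using
      (tendsto_pow_atTop (α := ℝ) two_ne_zero).comp tendsto_neg_atBot_atTop
  have h_arg : Tendsto (fun t : ℝ ↦ a - b * t ^ 2) atBot atBot := by
    simpa [sub_eq_add_neg] using
      tendsto_atBot_add_const_left _ a (tendsto_neg_atTop_atBot.comp (h_sq.const_mul_atTop hb))
  exact tendsto_exp_atBot.comp h_arg

theorem integrable_exp_sub_mul_sq (a : ℝ) {b : ℝ} (hb : 0 < b) :
    Integrable fun t ↦ rexp (a - b * t ^ 2) := by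
  simpa [sub_eq_add_neg, exp_add] using (integrable_exp_neg_mul_sq hb).const_mul (rexp a)

theorem re_neg_sq_sub_ofReal (c : ℂ) (t : ℝ) : (-(c - t) ^ 2).re = c.im ^ 2 - (c.re - t) ^ 2 := by
  simp [sq]

theorem norm_cexp_neg_sq_sub_mul_le (c : ℂ) (a t : ℝ) :
    ‖cexp (-(c - a * t) ^ 2)‖ ≤ rexp (‖c‖ ^ 2 - a ^ 2 / 2 * t ^ 2) := by
  rw [Complex.norm_exp, ← Complex.ofReal_mul, re_neg_sq_sub_ofReal, exp_le_exp,
    ← Complex.sq_norm_sub_sq_re]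
  nlinarith [sq_nonneg (a * t - 2 * c.re)]

theorem tendsto_cexp_neg_sq_sub_mul_atBot (c : ℂ) {a : ℝ} (ha : a ≠ 0) :
    Tendsto (fun t : ℝ ↦ cexp (-(c - a * t) ^ 2)) atBot (𝓝 0) :=
  squeeze_zero_norm (norm_cexp_neg_sq_sub_mul_le c a)
    (tendsto_exp_sub_mul_sq_atBot _ (by positivity))

theorem integrable_cexp_neg_sq_sub_mul (c : ℂ) {a : ℝ} (ha : a ≠ 0) :
    Integrable fun t : ℝ ↦ cexp (-(c - a * t) ^ 2) :=
  (integrable_exp_sub_mul_sq _ (by positivity)).mono'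
    (by fun_prop : Continuous _).aestronglyMeasurable (.of_forall (norm_cexp_neg_sq_sub_mul_le c a))

theorem hasDerivAt_integral_mul_cexp_neg_sq (z : ℂ) :
    HasDerivAt (fun x : ℂ ↦ ∫ t in (0:ℝ)..1, x * cexp (-(t * x) ^ 2)) (cexp (-z ^ 2)) z := by
  obtain ⟨C, hC⟩ := ((isCompact_closedBall z 1).prod (isCompact_Icc (a := (0:ℝ)) (b := 1)))
    |>.exists_bound_of_continuousOn (f := fun p : ℂ × ℝ ↦ p.1 * cexp (-(p.2 * p.1) ^ 2))
      (by fun_prop)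
  have h_diff (t : ℝ) (x : ℂ) : HasDerivAt (fun y : ℂ ↦ y * cexp (-(t * y) ^ 2))
      ((1 - 2 * (t * x) ^ 2) * cexp (-(t * x) ^ 2)) x := by
    refine ((hasDerivAt_id x).mul
      (((hasDerivAt_id x).const_mul (t : ℂ)).fun_pow 2).fun_neg.cexp).congr_deriv ?_
    simp only [id]
    ring
  -- the `x`-derivative of the integrand is the `t`-derivative of `t e^{-(tx)²}`
  have h_prim (t : ℝ) : HasDerivAt (fun s : ℝ ↦ (s : ℂ) * cexp (-(s * z) ^ 2))
      ((1 - 2 * (t * z) ^ 2) * cexp (-(t * z) ^ 2)) t := by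
    refine ((hasDerivAt_id (t : ℂ)).mul
      (((hasDerivAt_id (t : ℂ)).mul_const z).fun_pow 2).fun_neg.cexp).comp_ofReal.congr_deriv ?_
    simp only [id]
    ring
  obtain ⟨-, h_deriv⟩ := hasDerivAt_integral_of_differentiable_of_norm_le
    (μ := volume.restrict (Ioc (0:ℝ) 1))
    (F' := fun x t ↦ (1 - 2 * (t * x) ^ 2) * cexp (-(t * x) ^ 2)) one_pos
    (fun x ↦ (by fun_prop : Continuous _).aestronglyMeasurable)
    (by fun_prop : Continuous _).aestronglyMeasurable (.of_forall fun t x ↦ h_diff t x)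
    ((ae_restrict_mem measurableSet_Ioc).mono fun t ht x hx ↦
      hC (x, t) ⟨hx, Ioc_subset_Icc_self ht⟩)
    (integrable_const C)
  simp only [← intervalIntegral.integral_of_le zero_le_one] at h_deriv
  rw [intervalIntegral.integral_eq_sub_of_hasDerivAt (fun t _ ↦ h_prim t)
    ((by fun_prop : Continuous _).intervalIntegrable _ _)] at h_deriv
  simpa using h_deriv

theorem hasDerivAt_cerfc (z : ℂ) : HasDerivAt cerfc (-(2 / √π) * cexp (-z ^ 2)) z := by
  rw [neg_mul]
  exact ((hasDerivAt_integral_mul_cexp_neg_sq z).const_mul (2 / (√π : ℂ))).const_sub 1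

theorem differentiable_cerfc : Differentiable ℂ cerfc :=
  fun z ↦ (hasDerivAt_cerfc z).differentiableAt

@[fun_prop]
theorem continuous_cerfc : Continuous cerfc := differentiable_cerfc.continuous

theorem cerfc_zero : cerfc 0 = 1 := by simp [cerfc]

theorem hasDerivAt_integral_Iio_cexp_neg_sq_sub_mul {a : ℝ} (ha : 0 < a) (c : ℂ) :
    HasDerivAt (fun x : ℂ ↦ ∫ t in Iio (0:ℝ), cexp (-(x - a * t) ^ 2))
      (-(cexp (-c ^ 2) / a)) c := by
  have h_diff (t : ℝ) (x : ℂ) : HasDerivAt (fun y : ℂ ↦ cexp (-(y - a * t) ^ 2))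
      (-2 * (x - a * t) * cexp (-(x - a * t) ^ 2)) x := by
    refine (((hasDerivAt_id x).sub_const _).fun_pow 2).fun_neg.cexp.congr_deriv ?_
    simp only [id]
    ring
  have h_prim (t : ℝ) : HasDerivAt (fun s : ℝ ↦ -(cexp (-(c - a * s) ^ 2) / a))
      (-2 * (c - a * t) * cexp (-(c - a * t) ^ 2)) t := by
    have ha' : (a : ℂ) ≠ 0 := by exact_mod_cast ha.ne'
    refine ((((((hasDerivAt_id (t : ℂ)).const_mul (a : ℂ)).const_sub c).fun_pow 2).fun_neg.cexp
      |>.div_const (a : ℂ)).neg.comp_ofReal).congr_deriv ?_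
    simp only [id]
    field_simp
    ring
  obtain ⟨h_int, h_deriv⟩ := hasDerivAt_integral_of_differentiable_of_norm_le
    (μ := volume.restrict (Iio (0:ℝ))) (c := c)
    (F' := fun x t ↦ -2 * (x - a * t) * cexp (-(x - a * t) ^ 2))
    one_pos (fun x ↦ (by fun_prop : Continuous _).aestronglyMeasurable)
    (by fun_prop : Continuous _).aestronglyMeasurable (.of_forall fun t x ↦ h_diff t x)
    (.of_forall fun t x hx ↦ (norm_cexp_neg_sq_sub_mul_le x a t).trans <| exp_le_exp.2 <| by
      gcongr
      exact norm_le_of_mem_closedBall hx)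
    (integrable_exp_sub_mul_sq ((‖c‖ + 1) ^ 2) (b := a ^ 2 / 2) (by positivity)).integrableOn
  have h_FTC := integral_Iic_of_hasDerivAt_of_tendsto' (fun t _ ↦ h_prim t)
    ((integrableOn_Iic_iff_integrableOn_Iio).2 h_int)
    (by simpa using ((tendsto_cexp_neg_sq_sub_mul_atBot c ha.ne').div_const (a : ℂ)).neg)
  rw [setIntegral_congr_set Iio_ae_eq_Iic, h_FTC] at h_deriv
  simpa using h_deriv

theorem integral_Iio_cexp_neg_sq_sub_mul {a : ℝ} (ha : 0 < a) (c : ℂ) :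
    ∫ t in Iio (0:ℝ), cexp (-(c - a * t) ^ 2) = √π / (2 * a) * cerfc c := by
  have ha' : (a : ℂ) ≠ 0 := by exact_mod_cast ha.ne'
  have hπ : (√π : ℂ) ≠ 0 := by exact_mod_cast (sqrt_pos.2 pi_pos).ne'
  have h_const := is_const_of_deriv_eq_zero (f := fun x ↦
      (∫ t in Iio (0:ℝ), cexp (-(x - a * t) ^ 2)) - √π / (2 * a) * cerfc x)
    (fun x ↦ ((hasDerivAt_integral_Iio_cexp_neg_sq_sub_mul ha x).sub
      ((hasDerivAt_cerfc x).const_mul _)).differentiableAt)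
    (fun x ↦ ((hasDerivAt_integral_Iio_cexp_neg_sq_sub_mul ha x).sub
      ((hasDerivAt_cerfc x).const_mul _)).deriv.trans (by field_simp; ring)) c 0
  have h_gauss : ∫ t in Iio (0:ℝ), rexp (-a ^ 2 * t ^ 2) = √π / (2 * a) := by
    have := integral_comp_neg_Ioi 0 fun t ↦ rexp (-a ^ 2 * t ^ 2)
    rw [neg_zero, ← setIntegral_congr_set Iio_ae_eq_Iic] at this
    simp only [neg_sq] at this
    rw [← this, integral_gaussian_Ioi, sqrt_div pi_pos.le, sqrt_sq ha.le]
    ring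
  have h_zero : ∫ t in Iio (0:ℝ), cexp (-(0 - a * t) ^ 2) = √π / (2 * a) := by
    have h_real (t : ℝ) : cexp (-(0 - a * t) ^ 2) = (rexp (-a ^ 2 * t ^ 2) : ℂ) := by
      push_cast
      ring_nf
    simp_rw [h_real, integral_complex_ofReal, h_gauss]
    push_cast
    ring
  rw [h_zero, cerfc_zero] at h_const
  linear_combination h_const

theorem norm_cerfc_le (ζ : ℂ) : ‖cerfc ζ‖ ≤ 2 * rexp (ζ.im ^ 2) := by
  have h_rep := integral_Iio_cexp_neg_sq_sub_mul one_pos ζ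
  have hπ : (√π : ℂ) ≠ 0 := by exact_mod_cast (sqrt_pos.2 pi_pos).ne'
  have h_int : Integrable fun t : ℝ ↦ rexp (ζ.im ^ 2 - (ζ.re - t) ^ 2) := by
    simpa using (integrable_exp_sub_mul_sq (ζ.im ^ 2) one_pos).comp_sub_left ζ.re
  have h_norm : ‖∫ t in Iio (0:ℝ), cexp (-(ζ - t) ^ 2)‖ ≤ √π * rexp (ζ.im ^ 2) := calc
    _ ≤ ∫ t in Iio (0:ℝ), rexp (ζ.im ^ 2 - (ζ.re - t) ^ 2) :=
        norm_integral_le_of_norm_le h_int.integrableOn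
          (.of_forall fun t ↦ by rw [Complex.norm_exp, re_neg_sq_sub_ofReal])
    _ ≤ ∫ t, rexp (ζ.im ^ 2 - (ζ.re - t) ^ 2) :=
        setIntegral_le_integral h_int (.of_forall fun t ↦ (exp_pos _).le)
    _ = √π * rexp (ζ.im ^ 2) := by
        rw [integral_sub_left_eq_self (fun t ↦ rexp (ζ.im ^ 2 - t ^ 2)) volume ζ.re]
        simp only [sub_eq_add_neg, exp_add, integral_const_mul, mul_comm]
        simpa using integral_gaussian 1
  have h_cerfc : cerfc ζ = 2 / √π * ∫ t in Iio (0:ℝ), cexp (-(ζ - t) ^ 2) := by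
    simp only [Complex.ofReal_one, one_mul] at h_rep
    rw [h_rep]
    field_simp
  rw [h_cerfc, norm_mul, norm_div, Complex.norm_ofNat, Complex.norm_real,
    norm_of_nonneg (sqrt_nonneg _)]
  calc 2 / √π * _ ≤ 2 / √π * (√π * rexp (ζ.im ^ 2)) := by gcongr
    _ = 2 * rexp (ζ.im ^ 2) := by field_simp

theorem ofReal_sqrt_two_sq : ((√2 : ℝ) : ℂ) ^ 2 = 2 := by
  rw [← Complex.ofReal_pow, sq_sqrt zero_le_two, Complex.ofReal_ofNat]

theorem hasDerivAt_cerfc_sqrt_two_mul (y : ℂ) :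
    HasDerivAt (fun x ↦ cerfc (√2 * x)) (-(2 * √2 / √π) * cexp (-2 * y ^ 2)) y := by
  refine ((hasDerivAt_cerfc _).comp y ((hasDerivAt_id y).const_mul (√2 : ℂ))).congr_deriv ?_
  rw [mul_pow, ofReal_sqrt_two_sq]
  simp only [id]
  ring_nf

theorem cexp_neg_two_mul_sq_sub_mul_cexp (z w u : ℂ) :
    cexp (-2 * (z - u) ^ 2) * cexp (-2 * (w - u) ^ 2)
      = cexp (-(z - w) ^ 2) * cexp (-((z + w) - 2 * u) ^ 2) := by
  rw [← Complex.exp_add, ← Complex.exp_add]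
  ring_nf

/-- `fEdge z w = (1 / √2) * ∫ u in Iio 0, (edgeTerm z w u - edgeTerm w z u)`. -/
noncomputable def edgeTerm (z w u : ℂ) : ℂ := cexp (-2 * (z - u) ^ 2) * cerfc (√2 * (w - u))

theorem hasDerivAt_edgeTerm_left (z w u : ℂ) :
    HasDerivAt (edgeTerm · w u) (-4 * (z - u) * edgeTerm z w u) z := by
  refine (((((hasDerivAt_id z).sub_const u).fun_pow 2).const_mul (-2 : ℂ)).cexp.mul_const _)
    |>.congr_deriv ?_
  simp only [edgeTerm, id]
  ring

theorem hasDerivAt_edgeTerm_right (z w u : ℂ) :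
    HasDerivAt (edgeTerm z · u)
      (-(2 * √2 / √π) * (cexp (-2 * (z - u) ^ 2) * cexp (-2 * (w - u) ^ 2))) w := by
  refine (((hasDerivAt_cerfc_sqrt_two_mul (w - u)).comp w ((hasDerivAt_id w).sub_const u)).const_mul
    (cexp (-2 * (z - u) ^ 2))).congr_deriv ?_
  ring

theorem hasDerivAt_edgeTerm_ofReal (z w : ℂ) (u : ℝ) :
    HasDerivAt (fun s : ℝ ↦ edgeTerm z w s)
      (4 * (z - u) * edgeTerm z w u
        + 2 * √2 / √π * (cexp (-2 * (z - u) ^ 2) * cexp (-2 * (w - u) ^ 2))) u := by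
  have h_gauss := ((((hasDerivAt_id (u : ℂ)).const_sub z).fun_pow 2).const_mul (-2 : ℂ)).cexp
  have h_cerfc := (hasDerivAt_cerfc_sqrt_two_mul (w - u)).comp (u : ℂ)
    ((hasDerivAt_id (u : ℂ)).const_sub w)
  refine (h_gauss.mul h_cerfc).comp_ofReal.congr_deriv ?_
  simp only [edgeTerm, id, Function.comp_apply]
  ring

theorem norm_edgeTerm_le (z w : ℂ) (u : ℝ) :
    ‖edgeTerm z w u‖ ≤ 2 * rexp (2 * ‖z‖ ^ 2 + 2 * w.im ^ 2 - u ^ 2) := by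
  have h_gauss : ‖cexp (-2 * (z - u) ^ 2)‖ ≤ rexp (2 * ‖z‖ ^ 2 - u ^ 2) := by
    have h_re : (-2 * (z - u) ^ 2).re = 2 * (z.im ^ 2 - (z.re - u) ^ 2) := by
      rw [show -2 * (z - u) ^ 2 = ((2:ℝ) : ℂ) * -(z - u) ^ 2 by push_cast; ring,
        Complex.re_ofReal_mul, re_neg_sq_sub_ofReal]
    rw [Complex.norm_exp, h_re, exp_le_exp, ← Complex.sq_norm_sub_sq_re]
    nlinarith [sq_nonneg (u - 2 * z.re)]
  have h_cerfc : ‖cerfc (√2 * (w - u))‖ ≤ 2 * rexp (2 * w.im ^ 2) := by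
    refine (norm_cerfc_le _).trans_eq ?_
    simp [mul_pow]
  calc ‖edgeTerm z w u‖ ≤ rexp (2 * ‖z‖ ^ 2 - u ^ 2) * (2 * rexp (2 * w.im ^ 2)) := by
        rw [edgeTerm, norm_mul]
        gcongr
    _ = 2 * rexp (2 * ‖z‖ ^ 2 + 2 * w.im ^ 2 - u ^ 2) := by
        rw [mul_left_comm, ← exp_add]
        ring_nf

theorem tendsto_edgeTerm_atBot (z w : ℂ) :
    Tendsto (fun u : ℝ ↦ edgeTerm z w u) atBot (𝓝 0) :=
  squeeze_zero_norm (norm_edgeTerm_le z w)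
    (by simpa using (tendsto_exp_sub_mul_sq_atBot _ one_pos).const_mul 2)

theorem hasDerivAt_edgeTerm_sub (w u x : ℂ) :
    HasDerivAt (fun y ↦ edgeTerm y w u - edgeTerm w y u) (-4 * (x - u) * edgeTerm x w u
      + 2 * √2 / √π * (cexp (-2 * (x - u) ^ 2) * cexp (-2 * (w - u) ^ 2))) x := by
  refine ((hasDerivAt_edgeTerm_left x w u).sub (hasDerivAt_edgeTerm_right w x u)).congr_deriv ?_
  ring

theorem norm_edgeTerm_sub_le {z x : ℂ} (w : ℂ) (u : ℝ) (hx : x ∈ closedBall z 1) :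
    ‖edgeTerm x w u - edgeTerm w x u‖ ≤ 4 * rexp (2 * (‖z‖ + 1) ^ 2 + 2 * ‖w‖ ^ 2 - u ^ 2) := by
  have hx' := norm_le_of_mem_closedBall hx
  have hx_re := Complex.sq_norm_sub_sq_re x
  have hw_re := Complex.sq_norm_sub_sq_re w
  calc _ ≤ ‖edgeTerm x w u‖ + ‖edgeTerm w x u‖ := norm_sub_le _ _
    _ ≤ 2 * rexp (2 * (‖z‖ + 1) ^ 2 + 2 * ‖w‖ ^ 2 - u ^ 2)
        + 2 * rexp (2 * (‖z‖ + 1) ^ 2 + 2 * ‖w‖ ^ 2 - u ^ 2) := by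
      gcongr
      · refine (norm_edgeTerm_le x w u).trans ?_
        gcongr 2 * rexp ?_
        nlinarith [sq_nonneg x.re, sq_nonneg w.re, norm_nonneg x]
      · refine (norm_edgeTerm_le w x u).trans ?_
        gcongr 2 * rexp ?_
        nlinarith [sq_nonneg x.re, sq_nonneg w.re, norm_nonneg x]
    _ = _ := by ring

theorem integral_Iio_deriv_edgeTerm_sub (z w : ℂ)
    (h_int : IntegrableOn (fun u : ℝ ↦ -4 * (z - u) * edgeTerm z w u
      + 2 * √2 / √π * (cexp (-2 * (z - u) ^ 2) * cexp (-2 * (w - u) ^ 2))) (Iio 0)) :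
    ∫ u in Iio (0:ℝ), (-4 * (z - u) * edgeTerm z w u
      + 2 * √2 / √π * (cexp (-2 * (z - u) ^ 2) * cexp (-2 * (w - u) ^ 2)))
      = √2 * (cexp (-(z - w) ^ 2) * cerfc (z + w)) - edgeTerm z w 0 := by
  set k : ℂ := 2 * √2 / √π
  -- integration by parts: the integrand is a Gaussian in `z + w - 2u` minus `∂_u edgeTerm z w u`
  have h_split (u : ℝ) : -4 * (z - u) * edgeTerm z w u
      + k * (cexp (-2 * (z - u) ^ 2) * cexp (-2 * (w - u) ^ 2))
      = 2 * k * cexp (-(z - w) ^ 2) * cexp (-((z + w) - (2:ℝ) * u) ^ 2)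
        - (4 * (z - u) * edgeTerm z w u
          + k * (cexp (-2 * (z - u) ^ 2) * cexp (-2 * (w - u) ^ 2))) := by
    rw [cexp_neg_two_mul_sq_sub_mul_cexp]
    push_cast
    ring
  have h_gauss_int := (integrable_cexp_neg_sq_sub_mul (z + w) two_ne_zero).const_mul
    (2 * k * cexp (-(z - w) ^ 2))
  have h_deriv_int : IntegrableOn (fun u : ℝ ↦ 4 * (z - u) * edgeTerm z w u
      + k * (cexp (-2 * (z - u) ^ 2) * cexp (-2 * (w - u) ^ 2))) (Iio 0) :=
    (h_gauss_int.integrableOn.sub h_int).congr_fun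
      (fun u _ ↦ by simp only [Pi.sub_apply, h_split]; ring) measurableSet_Iio
  have h_FTC := integral_Iic_of_hasDerivAt_of_tendsto' (fun u _ ↦ hasDerivAt_edgeTerm_ofReal z w u)
    ((integrableOn_Iic_iff_integrableOn_Iio).2 h_deriv_int) (tendsto_edgeTerm_atBot z w)
  have hπ : (√π : ℂ) ≠ 0 := by exact_mod_cast (sqrt_pos.2 pi_pos).ne'
  rw [setIntegral_congr_fun measurableSet_Iio (fun u _ ↦ h_split u),
    integral_sub h_gauss_int.integrableOn h_deriv_int, integral_const_mul,
    integral_Iio_cexp_neg_sq_sub_mul two_pos, setIntegral_congr_set Iio_ae_eq_Iic, h_FTC]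
  simp only [k, Complex.ofReal_ofNat, Complex.ofReal_zero]
  field_simp
  ring

theorem stmt8 (z w : ℂ) :
    HasDerivAt (fun z => fEdge z w)
      (Complex.exp (-(z - w) ^ 2) * cerfc (z + w)
        - (1 / (Real.sqrt 2 : ℂ)) * Complex.exp (-2 * z ^ 2) * cerfc ((Real.sqrt 2 : ℂ) * w)) z := by
  obtain ⟨h_int, h_deriv⟩ := hasDerivAt_integral_of_differentiable_of_norm_le
    (μ := volume.restrict (Iio (0:ℝ))) (c := z) one_pos
    (fun x ↦ (by unfold edgeTerm; fun_prop : Continuous _).aestronglyMeasurable)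
    (by unfold edgeTerm; fun_prop : Continuous _).aestronglyMeasurable
    (.of_forall fun u x ↦ hasDerivAt_edgeTerm_sub w u x)
    (.of_forall fun u x hx ↦ norm_edgeTerm_sub_le w u hx)
    (Integrable.integrableOn (by simpa using (integrable_exp_sub_mul_sq _ one_pos).const_mul 4))
  rw [integral_Iio_deriv_edgeTerm_sub z w h_int] at h_deriv
  have h2 : (√2 : ℂ) ≠ 0 := by exact_mod_cast (sqrt_pos.2 two_pos).ne'
  refine (h_deriv.const_mul (1 / (√2 : ℂ))).congr_deriv ?_
  simp only [edgeTerm, sub_zero]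
  field_simp
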